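/- For the symmetric transition kernel q on ℤ, for every s ≥ 0, q^s(0,0) = ∑_{k=s}^{∞} ∑_{i∈ℤ} q(0,i)·[qᵏ(0,0) − qᵏ(i,0)], i.e. the return probability at time s telescopes as the tail sum of one-step averaged potential differences. -/

import Mathlib

open Filter Topology

/-- `k`-step transition probabilities of the translation-invariant walk on `ℤ`
with one-step displacement law `q`, i.e. kernel `(i,j) ↦ q (j-i)`. -/
noncomputable def kstep (q : ℤ → ℝ) : ℕ → ℤ → ℤ → ℝ
  | 0, i, j => if i = j then 1 else 0
  | k + 1, i, j => ∑' z : ℤ, kstep q k i z * q (j - z)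

lemma kstep_shift (q : ℤ → ℝ) : ∀ (k : ℕ) (i j : ℤ), kstep q k i j = kstep q k 0 (j - i) := by
  intro k
  induction k with
  | zero =>
    intro i j
    simp only [kstep]
    by_cases h : i = j
    · subst h; simp
    · rw [if_neg h, if_neg (by omega)]
  | succ k ih =>
    intro i j
    show (∑' z, kstep q k i z * q (j - z)) = ∑' z, kstep q k 0 z * q ((j - i) - z)
    calc (∑' z, kstep q k i z * q (j - z))
        = ∑' w, kstep q k i (w + i) * q (j - (w + i)) :=
          ((Equiv.addRight i).tsum_eq (fun z => kstep q k i z * q (j - z))).symm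
      _ = ∑' w, kstep q k 0 w * q ((j - i) - w) := by
          refine tsum_congr fun w => ?_
          rw [ih]
          have h1 : w + i - i = w := by ring
          have h2 : j - (w + i) = j - i - w := by ring
          rw [h1, h2]

lemma summable_q_mul (q : ℤ → ℝ) (hq_fin : (Function.support q).Finite)
    (f : ℤ → ℝ) : Summable (fun i => q i * f i) := by
  apply summable_of_finite_support
  exact hq_fin.subset (by
    intro i hi
    simp only [Function.mem_support] at hi ⊢
    intro h; apply hi; rw [h, zero_mul])

lemma onestep (q : ℤ → ℝ) (k : ℕ) :
    (∑' i : ℤ, q i * kstep q k i 0) = kstep q (k + 1) 0 0 := by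
  show _ = ∑' z, kstep q k 0 z * q (0 - z)
  calc (∑' i : ℤ, q i * kstep q k i 0)
      = ∑' i : ℤ, q (-i) * kstep q k (-i) 0 :=
        ((Equiv.neg ℤ).tsum_eq (fun i => q i * kstep q k i 0)).symm
    _ = ∑' z, kstep q k 0 z * q (0 - z) := by
        refine tsum_congr fun z => ?_
        rw [kstep_shift]
        have : (0 : ℤ) - -z = z := by ring
        rw [this, zero_sub, mul_comm]

/-- For a translation-invariant transition kernel `q` on `ℤ`
(finitely supported, with `qᵏ(0,0) → 0` and `qᵏ(i,0) ≤ qᵏ(0,0)`), for every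
`s ≥ 0` the return probability telescopes:
`q^s(0,0) = ∑_{k≥s} ∑_i q(0,i) [qᵏ(0,0) − qᵏ(i,0)]`. -/
theorem return_prob_tail_sum
    (q : ℤ → ℝ)
    (hq_nonneg : ∀ k, 0 ≤ q k)
    (hq_sum : ∑' k : ℤ, q k = 1)
    (hq_fin : (Function.support q).Finite)
    (hmax : ∀ (k : ℕ) (i : ℤ), kstep q k i 0 ≤ kstep q k 0 0)
    (hdecay : Tendsto (fun k : ℕ => kstep q k 0 0) atTop (𝓝 0)) :
    ∀ s : ℕ,
      kstep q s 0 0 =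
        ∑' k : ℕ, ∑' i : ℤ,
          q i * (kstep q (s + k) 0 0 - kstep q (s + k) i 0) := by
  intro s
  set a : ℕ → ℝ := fun n => kstep q n 0 0 with ha
  have hinner : ∀ n : ℕ,
      (∑' i : ℤ, q i * (kstep q n 0 0 - kstep q n i 0)) = a n - a (n + 1) := by
    intro n
    have h1 : Summable (fun i => q i * kstep q n 0 0) :=
      summable_q_mul q hq_fin _
    have h2 : Summable (fun i => q i * kstep q n i 0) :=
      summable_q_mul q hq_fin _
    calc (∑' i : ℤ, q i * (kstep q n 0 0 - kstep q n i 0))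
        = ∑' i : ℤ, (q i * kstep q n 0 0 - q i * kstep q n i 0) := by
          refine tsum_congr fun i => ?_; ring
      _ = (∑' i : ℤ, q i * kstep q n 0 0) - ∑' i : ℤ, q i * kstep q n i 0 :=
          Summable.tsum_sub h1 h2
      _ = a n - a (n + 1) := by
          rw [tsum_mul_right, hq_sum, one_mul, onestep]
  have hgoal : HasSum (fun k : ℕ => a (s + k) - a (s + k + 1)) (a s) := by
    have hnonneg : ∀ k : ℕ, 0 ≤ a (s + k) - a (s + k + 1) := by
      intro k
      rw [← hinner]
      exact tsum_nonneg fun i =>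
        mul_nonneg (hq_nonneg i) (sub_nonneg.2 (hmax (s + k) i))
    rw [hasSum_iff_tendsto_nat_of_nonneg hnonneg]
    have hsum : ∀ n : ℕ, (∑ k ∈ Finset.range n, (a (s + k) - a (s + k + 1)))
        = a s - a (s + n) := by
      intro n
      have := Finset.sum_range_sub' (fun k => a (s + k)) n
      simpa [add_assoc] using this
    simp only [hsum]
    have : Tendsto (fun n : ℕ => a (s + n)) atTop (𝓝 0) := by
      simpa [Function.comp_def, add_comm] using hdecay.comp (tendsto_add_atTop_nat s)
    simpa using (tendsto_const_nhds.sub this)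
  show a s = _
  rw [← hgoal.tsum_eq]
  refine tsum_congr fun k => ?_
  rw [hinner]
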